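/- Let F be a probability distribution on [0,∞) with first moment m₁ = ∫₀^∞ x dF(x) and second moment m₂ = ∫₀^∞ x² dF(x), and suppose 0 < m₂ < ∞. Then the Laplace–Stieltjes transform of F satisfies, for all s ≥ 0, F̂(s) ≤ 1 − m₁²/m₂ + (m₁²/m₂)·e^{−(m₂/m₁)s}. -/

import Mathlib

/-!
With `A(x) = ∫₀ˢ e^{-tx} dt` one has `1 - e^{-sx} = x A(x)`. Since `A` is convex, it lies above
its tangent line at any `b`: `A(x) ≥ A(b) - (x - b) K(b)` with `K(b) = ∫₀ˢ t e^{-tb} dt`, which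
follows by integrating `e^{-tx} ≥ e^{-tb} (1 - t (x - b))`. Multiplying by `x ≥ 0` gives the
quadratic majorant `e^{-sx} ≤ 1 - A(b) x + K(b) (x² - b x)`, and integrating it against `F`
gives `F̂(s) ≤ 1 - A(b) m₁ + K(b) (m₂ - b m₁)`. For `b = m₂ / m₁` the last term vanishes and
`m₁ A(b) = (m₁² / m₂) (1 - e^{-sb})`.
-/

open MeasureTheory

/-- Laplace–Stieltjes transform of a (nonnegative) probability distribution. -/
noncomputable def LS (F : Measure ℝ) (s : ℝ) : ℝ := ∫ x, Real.exp (-(s * x)) ∂F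

open Real

lemma mul_integral_exp_neg_mul (s x : ℝ) :
    x * ∫ t in (0)..s, exp (-(t * x)) = 1 - exp (-(s * x)) := by
  rw [← intervalIntegral.integral_const_mul]
  have hderiv : ∀ t ∈ Set.uIcc 0 s,
      HasDerivAt (fun t => -exp (-(t * x))) (x * exp (-(t * x))) t := fun t _ =>
    ((hasDerivAt_id' t).mul_const x).neg.exp.neg.congr_deriv (by simp only [Pi.neg_apply]; ring)
  rw [intervalIntegral.integral_eq_sub_of_hasDerivAt hderiv
    (Continuous.intervalIntegrable (by fun_prop) _ _)]
  simp only [zero_mul, neg_zero, exp_zero, sub_neg_eq_add]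
  ring

lemma integral_exp_neg_mul_tangent_le {s : ℝ} (hs : 0 ≤ s) (x b : ℝ) :
    (∫ t in (0)..s, exp (-(t * b))) - (x - b) * ∫ t in (0)..s, t * exp (-(t * b))
      ≤ ∫ t in (0)..s, exp (-(t * x)) := by
  rw [← intervalIntegral.integral_const_mul, ← intervalIntegral.integral_sub
    (Continuous.intervalIntegrable (by fun_prop) _ _)
    (Continuous.intervalIntegrable (by fun_prop) _ _)]
  refine intervalIntegral.integral_mono_on hs (Continuous.intervalIntegrable (by fun_prop) _ _)
    (Continuous.intervalIntegrable (by fun_prop) _ _) fun t _ => ?_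
  have hsplit : exp (-(t * x)) = exp (-(t * b)) * exp (-(t * (x - b))) := by
    rw [← exp_add]; ring_nf
  rw [hsplit]
  nlinarith [add_one_le_exp (-(t * (x - b))), exp_pos (-(t * b))]

lemma exp_neg_mul_le_quadratic {s x : ℝ} (hs : 0 ≤ s) (hx : 0 ≤ x) (b : ℝ) :
    exp (-(s * x)) ≤ 1 - (∫ t in (0)..s, exp (-(t * b))) * x
      + (∫ t in (0)..s, t * exp (-(t * b))) * (x ^ 2 - b * x) := by
  linear_combination mul_le_mul_of_nonneg_left (integral_exp_neg_mul_tangent_le hs x b) hx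
    + mul_integral_exp_neg_mul s x

lemma ae_nonneg_of_measure_Iio_eq_zero {F : Measure ℝ} (hF : F (Set.Iio 0) = 0) :
    ∀ᵐ x ∂F, 0 ≤ x := by
  rw [ae_iff]
  simp only [not_le]
  exact hF

lemma ae_exp_neg_mul_le_one {F : Measure ℝ} (hF : F (Set.Iio 0) = 0) {s : ℝ} (hs : 0 ≤ s) :
    ∀ᵐ x ∂F, exp (-(s * x)) ≤ 1 := by
  filter_upwards [ae_nonneg_of_measure_Iio_eq_zero hF] with x hx
  rw [exp_le_one_iff, neg_nonpos]
  exact mul_nonneg hs hx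

lemma integrable_exp_neg_mul {F : Measure ℝ} [IsFiniteMeasure F] (hF : F (Set.Iio 0) = 0)
    {s : ℝ} (hs : 0 ≤ s) : Integrable (fun x => exp (-(s * x))) F := by
  refine Integrable.of_bound (by fun_prop) 1 ?_
  filter_upwards [ae_exp_neg_mul_le_one hF hs] with x hx
  rwa [norm_of_nonneg (exp_pos _).le]

lemma LS_le_one {F : Measure ℝ} [IsProbabilityMeasure F] (hF : F (Set.Iio 0) = 0)
    {s : ℝ} (hs : 0 ≤ s) : LS F s ≤ 1 :=
  (integral_mono_of_nonneg (ae_of_all _ fun _ => (exp_pos _).le) (integrable_const 1)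
    (ae_exp_neg_mul_le_one hF hs)).trans_eq (by simp)

lemma LS_le_of_moments {F : Measure ℝ} [IsProbabilityMeasure F] (hF : F (Set.Iio 0) = 0)
    (hint : Integrable (fun x => x ^ 2) F) {s : ℝ} (hs : 0 ≤ s) (b : ℝ) :
    LS F s ≤ 1 - (∫ t in (0)..s, exp (-(t * b))) * ∫ x, x ∂F
      + (∫ t in (0)..s, t * exp (-(t * b))) * ((∫ x, x ^ 2 ∂F) - b * ∫ x, x ∂F) := by
  set A := ∫ t in (0)..s, exp (-(t * b))
  set K := ∫ t in (0)..s, t * exp (-(t * b))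
  have hint_id : Integrable (fun x : ℝ => x) F :=
    ((memLp_two_iff_integrable_sq (by fun_prop)).2 hint).integrable one_le_two
  have hlin : Integrable (fun x => 1 - A * x) F := (integrable_const 1).sub (hint_id.const_mul A)
  have hquad : Integrable (fun x => x ^ 2 - b * x) F := hint.sub (hint_id.const_mul b)
  calc LS F s ≤ ∫ x, (1 - A * x + K * (x ^ 2 - b * x)) ∂F := by
        refine integral_mono_ae (integrable_exp_neg_mul hF hs) (hlin.add (hquad.const_mul K)) ?_
        filter_upwards [ae_nonneg_of_measure_Iio_eq_zero hF] with x hx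
        linarith [exp_neg_mul_le_quadratic hs hx b]
    _ = 1 - A * ∫ x, x ∂F + K * ((∫ x, x ^ 2 ∂F) - b * ∫ x, x ∂F) := by
        rw [integral_add hlin (hquad.const_mul K), integral_sub (integrable_const 1)
          (hint_id.const_mul A), integral_const_mul, integral_const_mul,
          integral_sub hint (hint_id.const_mul b), integral_const_mul]
        simp

theorem stmt11_general (F : Measure ℝ) [IsProbabilityMeasure F] (hF : F (Set.Iio 0) = 0)
    (hint : Integrable (fun x => x ^ 2) F) :
    ∀ s : ℝ, 0 ≤ s →
      LS F s ≤ 1 - (∫ x, x ∂F) ^ 2 / (∫ x, x ^ 2 ∂F) +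
        (∫ x, x ∂F) ^ 2 / (∫ x, x ^ 2 ∂F) *
          Real.exp (-((∫ x, x ^ 2 ∂F) / (∫ x, x ∂F) * s)) := by
  intro s hs
  set m₁ := ∫ x, x ∂F
  set m₂ := ∫ x, x ^ 2 ∂F
  -- if `m₁` or `m₂` vanishes, the right-hand side is `1` because `x / 0 = 0`
  by_cases hdeg : m₁ = 0 ∨ m₂ = 0
  · rcases hdeg with h | h <;> simpa [h] using LS_le_one hF hs
  push Not at hdeg
  obtain ⟨hm₁, hm₂⟩ := hdeg
  have hbound : LS F s ≤ _ := LS_le_of_moments hF hint hs (m₂ / m₁)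
  rw [div_mul_cancel₀ _ hm₁, sub_self, mul_zero, add_zero] at hbound
  have hexp : exp (-(m₂ / m₁ * s)) = 1 - m₂ / m₁ * ∫ t in (0)..s, exp (-(t * (m₂ / m₁))) := by
    rw [mul_integral_exp_neg_mul, mul_comm, sub_sub_cancel]
  generalize ∫ t in (0)..s, exp (-(t * (m₂ / m₁))) = A at hbound hexp
  rw [hexp]
  convert hbound using 2
  field_simp
  ring

/-- Lemma 5: for a probability distribution `F` on `[0,∞)` with moments
`m₁ = ∫ x dF`, `m₂ = ∫ x² dF`, `0 < m₂ < ∞`, the LS-transform satisfies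
`F̂(s) ≤ 1 − m₁²/m₂ + (m₁²/m₂) e^{−(m₂/m₁)s}` for all `s ≥ 0`. -/
theorem stmt11 (F : Measure ℝ) [IsProbabilityMeasure F] (hF : F (Set.Iio 0) = 0)
    (hint : Integrable (fun x => x ^ 2) F) (hpos : 0 < ∫ x, x ^ 2 ∂F) :
    ∀ s : ℝ, 0 ≤ s →
      LS F s ≤ 1 - (∫ x, x ∂F) ^ 2 / (∫ x, x ^ 2 ∂F) +
        (∫ x, x ∂F) ^ 2 / (∫ x, x ^ 2 ∂F) *
          Real.exp (-((∫ x, x ^ 2 ∂F) / (∫ x, x ∂F) * s)) :=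
  stmt11_general F hF hint
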